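/- For every α ∈ (0,1) and every T > 0 there exists a constant C > 0 (depending only on α and T) such that for all t with 0 < t ≤ T and all x, x̄ ∈ [0,1], ∫₀¹ (G^N_t(x,r) − G^N_t(x̄,r))² dr ≤ C · |x − x̄|^{2α} · t^{−1/2−α}. -/

import Mathlib

open Real MeasureTheory

/-- The Neumann heat kernel on `[0,1]`:
`G^N_t(x,y) = 1 + 2 ∑_{k=1}^∞ e^{-k²π²t} cos(kπx) cos(kπy)`. -/
noncomputable def GN (t x y : ℝ) : ℝ :=
  1 + 2 * ∑' k : ℕ, Real.exp (-((k + 1 : ℝ) ^ 2 * π ^ 2 * t)) *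
      Real.cos ((k + 1 : ℝ) * π * x) * Real.cos ((k + 1 : ℝ) * π * y)

lemma int_cos_c (c : ℝ) (hc : c ≠ 0) :
    ∫ r in (0:ℝ)..1, Real.cos (c * r) = Real.sin c / c := by
  rw [intervalIntegral.integral_comp_mul_left (fun x => Real.cos x) hc]
  simp [integral_cos, div_eq_inv_mul]

lemma int_cos_int (j : ℤ) (hj : j ≠ 0) :
    ∫ r in (0:ℝ)..1, Real.cos ((j : ℝ) * π * r) = 0 := by
  have h : ((j:ℝ) * π) ≠ 0 := by
    refine mul_ne_zero ?_ pi_ne_zero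
    exact_mod_cast hj
  rw [int_cos_c _ h, Real.sin_int_mul_pi, zero_div]

lemma cos_orth (m n : ℕ) :
    ∫ r in (0:ℝ)..1, Real.cos ((m+1:ℝ)*π*r) * Real.cos ((n+1:ℝ)*π*r)
      = if m = n then 1/2 else 0 := by
  have key : ∀ r : ℝ, Real.cos ((m+1:ℝ)*π*r) * Real.cos ((n+1:ℝ)*π*r)
      = (Real.cos ((((m:ℤ) - n : ℤ) : ℝ) * π * r) + Real.cos ((((m:ℤ)+n+2 : ℤ) : ℝ) * π * r)) / 2 := by
    intro r
    rw [show ((((m:ℤ) - n : ℤ) : ℝ)) * π * r = (m+1:ℝ)*π*r - (n+1:ℝ)*π*r by push_cast; ring,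
      show ((((m:ℤ)+n+2 : ℤ) : ℝ)) * π * r = (m+1:ℝ)*π*r + (n+1:ℝ)*π*r by push_cast; ring,
      Real.cos_sub, Real.cos_add]
    ring
  simp_rw [key]
  rw [intervalIntegral.integral_div, intervalIntegral.integral_add
    ((by fun_prop : Continuous fun x => Real.cos ((((m:ℤ) - n : ℤ) : ℝ) * π * x)).intervalIntegrable 0 1)
    ((by fun_prop : Continuous fun x => Real.cos ((((m:ℤ)+n+2 : ℤ) : ℝ) * π * x)).intervalIntegrable 0 1)]
  rw [int_cos_int ((m:ℤ)+n+2) (by omega)]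
  by_cases h : m = n
  · subst h
    simp
  · rw [int_cos_int ((m:ℤ) - n) (by omega), if_neg h]
    norm_num

lemma summable_E {s : ℝ} (hs : 0 < s) :
    Summable (fun k : ℕ => Real.exp (-((k+1:ℝ)^2 * s))) := by
  have hg : Summable (fun k : ℕ => Real.exp (-s) ^ (k+1)) := by
    apply Summable.comp_injective ?_ (add_left_injective 1)
    exact summable_geometric_of_lt_one (Real.exp_pos _).le
      (Real.exp_lt_one_iff.2 (by linarith))
  refine Summable.of_nonneg_of_le (fun k => (Real.exp_pos _).le) (fun k => ?_) hg
  rw [← Real.exp_nat_mul]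
  apply Real.exp_le_exp.2
  have h0 : (0:ℝ) ≤ (k:ℝ) := Nat.cast_nonneg k
  push_cast
  nlinarith [mul_nonneg (mul_nonneg h0 (by linarith : (0:ℝ) ≤ (k:ℝ)+1)) hs.le]

lemma sum_E_le {s : ℝ} (hs : 0 < s) :
    ∑' k : ℕ, Real.exp (-((k+1:ℝ)^2 * s)) ≤ Real.sqrt (π / s) / 2 := by
  have hint : Integrable (fun u : ℝ => Real.exp (-s * u^2)) := integrable_exp_neg_mul_sq hs
  apply Real.tsum_le_of_sum_range_le (fun k => (Real.exp_pos _).le)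
  intro n
  have step : ∀ k : ℕ, Real.exp (-((k+1:ℝ)^2 * s)) ≤
      ∫ u in (k:ℝ)..(k+1:ℕ), Real.exp (-s * u^2) := by
    intro k
    have : Real.exp (-((k+1:ℝ)^2 * s)) =
        ∫ _ in (k:ℝ)..(k+1:ℕ), Real.exp (-((k+1:ℝ)^2 * s)) := by
      rw [intervalIntegral.integral_const]
      push_cast
      simp
    rw [this]
    apply intervalIntegral.integral_mono_on (by push_cast; linarith)
      (intervalIntegrable_const) hint.intervalIntegrable
    intro u hu
    apply Real.exp_le_exp.2
    have hu0 : (k:ℝ) ≤ u := hu.1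
    have hu1 : u ≤ (k:ℝ)+1 := by
      have := hu.2; push_cast at this; linarith
    have h0 : (0:ℝ) ≤ (k:ℝ) := Nat.cast_nonneg k
    have hu2 : u^2 ≤ ((k:ℝ)+1)^2 := by nlinarith
    nlinarith [mul_le_mul_of_nonneg_left hu2 hs.le]
  calc ∑ k ∈ Finset.range n, Real.exp (-((k+1:ℝ)^2 * s))
      ≤ ∑ k ∈ Finset.range n, ∫ u in (k:ℝ)..(k+1:ℕ), Real.exp (-s * u^2) :=
        Finset.sum_le_sum (fun k _ => step k)
    _ = ∫ u in (0:ℝ)..(n:ℕ), Real.exp (-s * u^2) := by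
        rw [show (0:ℝ) = ((0:ℕ):ℝ) by norm_num]
        apply intervalIntegral.sum_integral_adjacent_intervals (a := fun k : ℕ => (k:ℝ))
        intro k _
        exact hint.intervalIntegrable
    _ = ∫ u in Set.Ioc (0:ℝ) (n:ℕ), Real.exp (-s * u^2) := by
        rw [intervalIntegral.integral_of_le (by positivity)]
    _ ≤ ∫ u in Set.Ioi (0:ℝ), Real.exp (-s * u^2) := by
        apply setIntegral_mono_set hint.integrableOn
        · filter_upwards with u using (Real.exp_pos _).le
        · filter_upwards with u
          exact fun hu => hu.1
    _ = Real.sqrt (π / s) / 2 := integral_gaussian_Ioi s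

lemma abs_cos_sub_cos (a b : ℝ) : |Real.cos a - Real.cos b| ≤ |a - b| := by
  rw [Real.cos_sub_cos, abs_mul, abs_mul]
  have h1 : |(-2:ℝ)| * |Real.sin ((a+b)/2)| ≤ 2 :=
    mul_le_of_le_one_right (by norm_num) (Real.abs_sin_le_one _) |>.trans (by norm_num)
  have h2 : |Real.sin ((a-b)/2)| ≤ |a-b|/2 := by
    have := Real.abs_sin_le_abs (x := (a-b)/2)
    rwa [abs_div, abs_of_pos (by norm_num : (0:ℝ) < 2)] at this
  calc |(-2:ℝ)| * |Real.sin ((a+b)/2)| * |Real.sin ((a-b)/2)| ≤ 2 * (|a-b|/2) :=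
        mul_le_mul h1 h2 (abs_nonneg _) (by norm_num)
    _ = |a - b| := by ring

lemma rpow_mul_exp_neg_le {u a : ℝ} (hu : 0 ≤ u) (ha0 : 0 ≤ a) (ha1 : a ≤ 1) :
    u ^ a * Real.exp (-u) ≤ 1 := by
  rcases le_or_gt u 1 with h | h
  · have h1 : u ^ a ≤ 1 := Real.rpow_le_one hu h ha0
    have h2 : Real.exp (-u) ≤ 1 := by rw [Real.exp_le_one_iff]; linarith
    calc u ^ a * Real.exp (-u) ≤ 1 * 1 :=
          mul_le_mul h1 h2 (Real.exp_pos _).le one_pos.le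
      _ = 1 := by ring
  · have h1 : u ^ a ≤ u := by
      calc u ^ a ≤ u ^ (1:ℝ) := Real.rpow_le_rpow_of_exponent_le h.le ha1
        _ = u := Real.rpow_one u
    have h2 : u ≤ Real.exp u := by
      have := Real.add_one_le_exp u; linarith
    calc u ^ a * Real.exp (-u) ≤ Real.exp u * Real.exp (-u) :=
          mul_le_mul_of_nonneg_right (h1.trans h2) (Real.exp_pos _).le
      _ = 1 := by rw [← Real.exp_add]; simp

lemma interp {d A B α : ℝ} (hd : 0 ≤ d) (hA : d ≤ A) (hB : d ≤ B)
    (hα0 : 0 ≤ α) (hα1 : α ≤ 1) : d ≤ A ^ (1-α) * B ^ α := by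
  have h1 : d = d ^ (1-α) * d ^ α := by
    rw [← Real.rpow_add' hd (by norm_num)]
    norm_num
  rw [h1]
  exact mul_le_mul (Real.rpow_le_rpow hd hA (by linarith)) (Real.rpow_le_rpow hd hB hα0)
    (Real.rpow_nonneg hd α) (Real.rpow_nonneg (hd.trans hA) _)

section Key
variable (t x x' : ℝ)

noncomputable def ck (k : ℕ) : ℝ :=
  2 * Real.exp (-((k + 1 : ℝ) ^ 2 * π ^ 2 * t)) *
    (Real.cos ((k + 1 : ℝ) * π * x) - Real.cos ((k + 1 : ℝ) * π * x'))

variable (ht : 0 < t)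
include ht

lemma hs0 : 0 < π^2 * t := by positivity

lemma summable_ck_abs : Summable (fun k : ℕ => |ck t x x' k|) := by
  refine Summable.of_nonneg_of_le (fun k => abs_nonneg _) (fun k => ?_)
    (((summable_E (hs0 t ht)).mul_left 4))
  unfold ck
  rw [abs_mul, abs_mul]
  have h1 : |Real.cos ((k + 1 : ℝ) * π * x) - Real.cos ((k + 1 : ℝ) * π * x')| ≤ 2 := by
    have := Real.neg_one_le_cos ((k + 1 : ℝ) * π * x)
    have := Real.cos_le_one ((k + 1 : ℝ) * π * x)
    have := Real.neg_one_le_cos ((k + 1 : ℝ) * π * x')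
    have := Real.cos_le_one ((k + 1 : ℝ) * π * x')
    rw [abs_le]; constructor <;> linarith
  have h2 : |Real.exp (-((k + 1 : ℝ) ^ 2 * π ^ 2 * t))| = Real.exp (-((k+1:ℝ)^2 * (π^2 * t))) := by
    rw [abs_of_pos (Real.exp_pos _)]; ring_nf
  rw [h2]
  have := Real.exp_pos (-((k+1:ℝ)^2 * (π^2 * t)))
  calc |(2:ℝ)| * Real.exp (-((k+1:ℝ)^2 * (π^2*t))) * |_ - _|
      ≤ |(2:ℝ)| * Real.exp (-((k+1:ℝ)^2 * (π^2*t))) * 2 := by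
        apply mul_le_mul_of_nonneg_left h1 (by positivity)
    _ = 4 * Real.exp (-((k+1:ℝ)^2 * (π^2*t))) := by
        rw [abs_of_pos (by norm_num : (0:ℝ) < 2)]; ring

lemma GN_diff (r : ℝ) :
    GN t x r - GN t x' r = ∑' k : ℕ, ck t x x' k * Real.cos ((k+1:ℝ)*π*r) := by
  have hsum : ∀ y : ℝ, Summable (fun k : ℕ =>
      Real.exp (-((k + 1 : ℝ) ^ 2 * π ^ 2 * t)) *
      Real.cos ((k + 1 : ℝ) * π * y) * Real.cos ((k + 1 : ℝ) * π * r)) := by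
    intro y
    apply Summable.of_abs
    refine Summable.of_nonneg_of_le (fun k => abs_nonneg _) (fun k => ?_) (summable_E (hs0 t ht))
    rw [abs_mul, abs_mul]
    have h2 : |Real.exp (-((k + 1 : ℝ) ^ 2 * π ^ 2 * t))| = Real.exp (-((k+1:ℝ)^2 * (π^2 * t))) := by
      rw [abs_of_pos (Real.exp_pos _)]; ring_nf
    rw [h2]
    calc Real.exp (-((k+1:ℝ)^2 * (π^2*t))) * |Real.cos ((k + 1 : ℝ) * π * y)| * |Real.cos ((k + 1 : ℝ) * π * r)|
        ≤ Real.exp (-((k+1:ℝ)^2 * (π^2*t))) * 1 * 1 := by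
          apply mul_le_mul (mul_le_mul le_rfl (Real.abs_cos_le_one _) (abs_nonneg _) (Real.exp_pos _).le)
            (Real.abs_cos_le_one _) (abs_nonneg _) (by positivity)
      _ = Real.exp (-((k+1:ℝ)^2 * (π^2*t))) := by ring
  unfold GN
  rw [show ∀ a b : ℝ, 1 + 2*a - (1 + 2*b) = 2*(a-b) by intros; ring]
  rw [← Summable.tsum_sub (hsum x) (hsum x'), ← tsum_mul_left]
  congr 1
  funext k
  unfold ck
  ring

lemma l2_identity :
    ∫ r in (0:ℝ)..1, (GN t x r - GN t x' r)^2 = ∑' k : ℕ, (ck t x x' k)^2 / 2 := by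
  set c : ℕ → ℝ := ck t x x' with hc
  set g : ℕ → ℝ → ℝ := fun k r => c k * Real.cos ((k+1:ℝ)*π*r) with hg
  have hcs : Summable (fun k => |c k|) := summable_ck_abs t x x' ht
  have hgb : ∀ k r, |g k r| ≤ |c k| := by
    intro k r
    rw [hg]
    simp only []
    rw [abs_mul]
    exact mul_le_of_le_one_right (abs_nonneg _) (Real.abs_cos_le_one _)
  have hgcont : ∀ k : ℕ, Continuous (g k) := by
    intro k; exact continuous_const.mul (by fun_prop)
  set f : ℝ → ℝ := fun r => ∑' k, g k r with hf
  have hfc : Continuous f := by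
    apply continuous_tsum hgcont hcs
    intro k r
    simpa using hgb k r
  set K : ℝ := ∑' k, |c k| with hK
  have hKb : ∀ r, |f r| ≤ K := by
    intro r
    calc |f r| = ‖∑' k, g k r‖ := rfl
      _ ≤ ∑' k, ‖g k r‖ := norm_tsum_le_tsum_norm (by
          refine Summable.of_nonneg_of_le (fun k => norm_nonneg _) (fun k => ?_) hcs
          simpa using hgb k r)
      _ ≤ ∑' k, |c k| := by
          apply Summable.tsum_le_tsum (fun k => by simpa using hgb k r) ?_ hcs
          refine Summable.of_nonneg_of_le (fun k => norm_nonneg _) (fun k => ?_) hcs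
          simpa using hgb k r
  have hGf : ∀ r, GN t x r - GN t x' r = f r := fun r => GN_diff t x x' ht r
  have hμ : (volume (Set.Ioc (0:ℝ) 1)).toReal = 1 := by simp
  -- each g k integrable on Ioc 0 1
  have hgint : ∀ k : ℕ, IntegrableOn (g k) (Set.Ioc (0:ℝ) 1) volume := fun k =>
    (hgcont k).integrableOn_Ioc
  have hfint : IntegrableOn f (Set.Ioc (0:ℝ) 1) volume := hfc.integrableOn_Ioc
  -- step 3 : for each k, ∫ g k * f = c k ^ 2 / 2
  have step3 : ∀ k : ℕ, ∫ r in Set.Ioc (0:ℝ) 1, g k r * f r = c k ^ 2 / 2 := by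
    intro k
    have e1 : ∀ r, g k r * f r = ∑' j, g k r * g j r := by
      intro r
      rw [hf]
      simp only []
      rw [← tsum_mul_left]
    have hint2 : ∀ j : ℕ, Integrable (fun r => g k r * g j r) (volume.restrict (Set.Ioc (0:ℝ) 1)) :=
      fun j => ((hgcont k).mul (hgcont j)).integrableOn_Ioc
    have hnorm2 : ∀ j : ℕ, (∫ r in Set.Ioc (0:ℝ) 1, ‖g k r * g j r‖) ≤ |c k| * |c j| := by
      intro j
      have : ∀ r, ‖g k r * g j r‖ ≤ |c k| * |c j| := by
        intro r
        rw [Real.norm_eq_abs, abs_mul]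
        exact mul_le_mul (hgb k r) (hgb j r) (abs_nonneg _) (abs_nonneg _)
      calc (∫ r in Set.Ioc (0:ℝ) 1, ‖g k r * g j r‖)
          ≤ ∫ _ in Set.Ioc (0:ℝ) 1, |c k| * |c j| :=
            integral_mono_of_nonneg (Filter.Eventually.of_forall fun r => norm_nonneg _)
              (integrable_const _) (Filter.Eventually.of_forall this)
        _ = |c k| * |c j| := by rw [setIntegral_const, Measure.real, hμ, one_smul]
    have interch : ∑' j, ∫ r in Set.Ioc (0:ℝ) 1, g k r * g j r
        = ∫ r in Set.Ioc (0:ℝ) 1, g k r * f r := by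
      simp_rw [e1]
      apply integral_tsum_of_summable_integral_norm hint2
      refine Summable.of_nonneg_of_le
        (fun j => integral_nonneg (fun r => norm_nonneg _)) hnorm2 (hcs.mul_left _)
    rw [← interch]
    have orth : ∀ j : ℕ, ∫ r in Set.Ioc (0:ℝ) 1, g k r * g j r
        = if j = k then c k ^ 2 / 2 else 0 := by
      intro j
      have : ∀ r, g k r * g j r = (c k * c j) * (Real.cos ((k+1:ℝ)*π*r) * Real.cos ((j+1:ℝ)*π*r)) := by
        intro r; rw [hg]; ring
      simp_rw [this]
      rw [MeasureTheory.integral_const_mul, ← intervalIntegral.integral_of_le (zero_le_one), cos_orth k j]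
      by_cases h : j = k
      · subst h; simp; ring
      · rw [if_neg (fun hh => h hh.symm), if_neg h, mul_zero]
    simp_rw [orth]
    exact tsum_ite_eq k (fun _ => c k ^2 / 2)
  -- step 1+2 : ∫ f^2 = ∑' k ∫ g k f
  have e0 : ∀ r, f r ^ 2 = ∑' k, g k r * f r := by
    intro r
    rw [sq, ← tsum_mul_right]
  have hint1 : ∀ k : ℕ, Integrable (fun r => g k r * f r) (volume.restrict (Set.Ioc (0:ℝ) 1)) :=
    fun k => ((hgcont k).mul hfc).integrableOn_Ioc
  have hnorm1 : ∀ k : ℕ, (∫ r in Set.Ioc (0:ℝ) 1, ‖g k r * f r‖) ≤ |c k| * K := by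
    intro k
    have hb : ∀ r, ‖g k r * f r‖ ≤ |c k| * K := by
      intro r
      rw [Real.norm_eq_abs, abs_mul]
      exact mul_le_mul (hgb k r) (hKb r) (abs_nonneg _)  (abs_nonneg _)
    calc (∫ r in Set.Ioc (0:ℝ) 1, ‖g k r * f r‖)
        ≤ ∫ _ in Set.Ioc (0:ℝ) 1, |c k| * K :=
          integral_mono_of_nonneg (Filter.Eventually.of_forall fun r => norm_nonneg _)
            (integrable_const _) (Filter.Eventually.of_forall hb)
      _ = |c k| * K := by rw [setIntegral_const, Measure.real, hμ, one_smul]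
  have interch1 : ∑' k, ∫ r in Set.Ioc (0:ℝ) 1, g k r * f r
      = ∫ r in Set.Ioc (0:ℝ) 1, f r ^ 2 := by
    simp_rw [e0]
    apply integral_tsum_of_summable_integral_norm hint1
    refine Summable.of_nonneg_of_le
      (fun k => integral_nonneg (fun r => norm_nonneg _)) hnorm1 (hcs.mul_right _)
  calc ∫ r in (0:ℝ)..1, (GN t x r - GN t x' r)^2
      = ∫ r in Set.Ioc (0:ℝ) 1, f r ^ 2 := by
        rw [intervalIntegral.integral_of_le (zero_le_one)]
        congr 1
        funext r
        rw [hGf r]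
    _ = ∑' k, ∫ r in Set.Ioc (0:ℝ) 1, g k r * f r := interch1.symm
    _ = ∑' k, c k ^ 2 / 2 := by
        congr 1
        funext k
        exact step3 k
end Key

lemma per_term (α t x x' : ℝ) (hα0 : 0 < α) (hα1 : α < 1) (ht : 0 < t) (k : ℕ) :
    (ck t x x' k)^2 / 2 ≤ 8 * |x - x'| ^ (2*α) * t ^ (-α) *
      Real.exp (-((k+1:ℝ)^2 * (π^2 * t))) := by
  set D := |x - x'| with hD
  set E := Real.exp (-((k+1:ℝ)^2 * (π^2 * t))) with hEdef
  set d := Real.cos ((k + 1 : ℝ) * π * x) - Real.cos ((k + 1 : ℝ) * π * x') with hd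
  have hE0 : 0 < E := Real.exp_pos _
  have hck : ck t x x' k = 2 * E * d := by
    unfold ck
    rw [hEdef, ← hd, mul_assoc ((k+1:ℝ)^2)]
  set u : ℝ := (k+1:ℝ)^2 * (π^2 * t) with hu
  have hu0 : (0:ℝ) ≤ u := by positivity
  set P : ℝ := ((k+1:ℝ)^2 * π^2) ^ α with hP
  set a : ℝ := D ^ (2*α) with ha
  have ha0 : 0 ≤ a := Real.rpow_nonneg (abs_nonneg _) _
  have hP0 : 0 ≤ P := Real.rpow_nonneg (by positivity) _
  -- d^2 ≤ 4 * P * a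
  have hdabs : |d| ≤ 2 := by
    have h1 := Real.neg_one_le_cos ((k + 1 : ℝ) * π * x)
    have h2 := Real.cos_le_one ((k + 1 : ℝ) * π * x)
    have h3 := Real.neg_one_le_cos ((k + 1 : ℝ) * π * x')
    have h4 := Real.cos_le_one ((k + 1 : ℝ) * π * x')
    rw [abs_le]; constructor <;> (rw [hd]; linarith)
  have hdlip : |d| ≤ (k+1:ℝ) * π * D := by
    have := abs_cos_sub_cos ((k + 1 : ℝ) * π * x) ((k + 1 : ℝ) * π * x')
    rw [← hd] at this
    calc |d| ≤ |(k + 1 : ℝ) * π * x - (k + 1 : ℝ) * π * x'| := this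
      _ = (k+1:ℝ) * π * D := by
          rw [show (k + 1 : ℝ) * π * x - (k + 1 : ℝ) * π * x' = ((k+1:ℝ)*π) * (x - x') by ring,
            abs_mul, abs_of_pos (by positivity : (0:ℝ) < (k+1:ℝ)*π), hD]
  have hd2a : d^2 ≤ 4 := by nlinarith [sq_abs d, abs_nonneg d]
  have hd2b : d^2 ≤ ((k+1:ℝ)*π*D)^2 := by
    nlinarith [sq_abs d, abs_nonneg d]
  have hDa : D ^ (2*α) = (D^2) ^ α := by
    rw [← Real.rpow_natCast D 2, ← Real.rpow_mul (abs_nonneg _)]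
    norm_num
    rfl
  have h3 : (((k+1:ℝ)*π*D)^2) ^ α = P * a := by
    rw [show ((k+1:ℝ)*π*D)^2 = ((k+1:ℝ)^2 * π^2) * D^2 by ring,
      Real.mul_rpow (by positivity) (by positivity), hP, ha, hDa]
  have h4 : ((4:ℝ)) ^ (1-α) ≤ 4 := by
    calc ((4:ℝ)) ^ (1-α) ≤ ((4:ℝ)) ^ (1:ℝ) :=
          Real.rpow_le_rpow_of_exponent_le (by norm_num) (by linarith)
      _ = 4 := Real.rpow_one 4
  have hd2 : d^2 ≤ 4 * P * a := by
    calc d^2 ≤ 4 ^ (1-α) * (((k+1:ℝ)*π*D)^2) ^ α :=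
          interp (sq_nonneg d) hd2a hd2b hα0.le hα1.le
      _ = 4 ^ (1-α) * (P * a) := by rw [h3]
      _ ≤ 4 * (P * a) := mul_le_mul_of_nonneg_right h4 (mul_nonneg hP0 ha0)
      _ = 4 * P * a := by ring
  -- P * E ≤ t ^ (-α)
  have hPE : P * E ≤ t ^ (-α) := by
    have hPsplit : P = u ^ α * t ^ (-α) := by
      rw [Real.rpow_neg ht.le, ← Real.inv_rpow ht.le,
        ← Real.mul_rpow hu0 (by positivity : (0:ℝ) ≤ t⁻¹), hP]
      congr 1
      rw [hu]
      field_simp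
    calc P * E = (u ^ α * Real.exp (-u)) * t ^ (-α) := by
          rw [hPsplit, hEdef]; ring
      _ ≤ 1 * t ^ (-α) := mul_le_mul_of_nonneg_right
          (rpow_mul_exp_neg_le hu0 hα0.le hα1.le) (Real.rpow_nonneg ht.le _)
      _ = t ^ (-α) := one_mul _
  calc (ck t x x' k)^2 / 2 = 2 * d^2 * E^2 := by rw [hck]; ring
    _ ≤ 2 * (4 * P * a) * E^2 :=
        mul_le_mul_of_nonneg_right
          (mul_le_mul_of_nonneg_left hd2 (by norm_num)) (sq_nonneg E)
    _ = 8 * a * ((P * E) * E) := by ring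
    _ ≤ 8 * a * (t ^ (-α) * E) := by
        apply mul_le_mul_of_nonneg_left
          (mul_le_mul_of_nonneg_right hPE hE0.le) (by positivity)
    _ = 8 * D ^ (2*α) * t ^ (-α) * E := by rw [ha]; ring

theorem neumann_kernel_space_increment_L2 (α T : ℝ) (hα0 : 0 < α) (hα1 : α < 1)
    (hT : 0 < T) :
    ∃ C : ℝ, 0 < C ∧ ∀ t x x' : ℝ, 0 < t → t ≤ T →
      x ∈ Set.Icc (0 : ℝ) 1 → x' ∈ Set.Icc (0 : ℝ) 1 →
      ∫ r in (0 : ℝ)..1, (GN t x r - GN t x' r) ^ 2 ≤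
        C * |x - x'| ^ (2 * α) * t ^ (-(1/2) - α) := by
  refine ⟨8, by norm_num, ?_⟩
  intro t x x' ht htT hx hx'
  have hs : (0:ℝ) < π^2 * t := by positivity
  set D := |x - x'| with hD
  have hD0 : 0 ≤ D := abs_nonneg _
  have ha0 : (0:ℝ) ≤ D ^ (2*α) := Real.rpow_nonneg hD0 _
  have hτ0 : (0:ℝ) ≤ t ^ (-α) := Real.rpow_nonneg ht.le _
  have hsum8 : Summable (fun k : ℕ =>
      8 * D ^ (2*α) * t ^ (-α) * Real.exp (-((k+1:ℝ)^2 * (π^2 * t)))) :=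
    (summable_E hs).mul_left _
  have hle : ∀ k : ℕ, (ck t x x' k)^2 / 2 ≤
      8 * D ^ (2*α) * t ^ (-α) * Real.exp (-((k+1:ℝ)^2 * (π^2 * t))) :=
    fun k => per_term α t x x' hα0 hα1 ht k
  have hsumL : Summable (fun k : ℕ => (ck t x x' k)^2 / 2) :=
    Summable.of_nonneg_of_le (fun k => by positivity) hle hsum8
  have hsqrt : Real.sqrt (π / (π^2 * t)) / 2 ≤ t ^ (-(1/2) : ℝ) := by
    have hpi : (1:ℝ) ≤ π := by nlinarith [Real.pi_gt_three]
    have h1 : π / (π^2 * t) = (π * t)⁻¹ := by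
      field_simp
    have h3 : Real.sqrt t ≤ Real.sqrt (π*t) :=
      Real.sqrt_le_sqrt (by nlinarith)
    have h4 : (Real.sqrt (π*t))⁻¹ ≤ (Real.sqrt t)⁻¹ :=
      inv_anti₀ (Real.sqrt_pos.2 ht) h3
    have h5 : t ^ (-(1/2) : ℝ) = (Real.sqrt t)⁻¹ := by
      rw [Real.rpow_neg ht.le, Real.sqrt_eq_rpow]
    have h6 : (0:ℝ) < (Real.sqrt (π*t))⁻¹ := by
      rw [inv_pos]
      exact Real.sqrt_pos.2 (by nlinarith)
    calc Real.sqrt (π / (π^2 * t)) / 2 = (Real.sqrt (π*t))⁻¹ / 2 := by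
          rw [h1, Real.sqrt_inv]
      _ ≤ (Real.sqrt (π*t))⁻¹ := by linarith
      _ ≤ (Real.sqrt t)⁻¹ := h4
      _ = t ^ (-(1/2) : ℝ) := h5.symm
  rw [l2_identity t x x' ht]
  calc ∑' k, (ck t x x' k)^2 / 2
      ≤ ∑' k : ℕ, 8 * D ^ (2*α) * t ^ (-α) * Real.exp (-((k+1:ℝ)^2 * (π^2 * t))) :=
        Summable.tsum_le_tsum hle hsumL hsum8
    _ = 8 * D ^ (2*α) * t ^ (-α) * ∑' k : ℕ, Real.exp (-((k+1:ℝ)^2 * (π^2 * t))) :=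
        tsum_mul_left
    _ ≤ 8 * D ^ (2*α) * t ^ (-α) * (Real.sqrt (π / (π^2 * t)) / 2) :=
        mul_le_mul_of_nonneg_left (sum_E_le hs) (by positivity)
    _ ≤ 8 * D ^ (2*α) * t ^ (-α) * t ^ (-(1/2) : ℝ) :=
        mul_le_mul_of_nonneg_left hsqrt (by positivity)
    _ = 8 * D ^ (2*α) * t ^ (-(1/2) - α) := by
        rw [mul_assoc, ← Real.rpow_add ht]
        congr 2
        ring
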